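/- arXiv:1502.00274 — 3 statements merged into one kernel-verified Lean document; each statement's English description precedes it below -/
import Mathlib

section
/- Let Θ₂ be a nonsingular real antisymmetric n×n matrix and let M be a real antisymmetric n×n matrix. Then the general solution a ∈ ℝ^{n×n} of the linear equation a Θ₂ + Θ₂ aᵀ + M = 0 is exactly a = 2 Θ₂ R − (1/2) M Θ₂^{−1} where R ranges over real symmetric n×n matrices. That is, a satisfies the equation if and only if a is of this form for some symmetric R. -/
open Matrix

/-- General solution of the linear equation `a Θ₂ + Θ₂ aᵀ + M = 0` for nonsingular
antisymmetric `Θ₂` and antisymmetric `M`: exactly the matrices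
`a = 2 Θ₂ R − (1/2) M Θ₂⁻¹` with `R` symmetric. -/
theorem lyapunov_ccr_general_solution {n : ℕ}
    (Θ₂ : Matrix (Fin n) (Fin n) ℝ) (hΘasym : Θ₂ᵀ = -Θ₂) (hΘinv : IsUnit Θ₂.det)
    (M : Matrix (Fin n) (Fin n) ℝ) (hM : Mᵀ = -M)
    (a : Matrix (Fin n) (Fin n) ℝ) :
    a * Θ₂ + Θ₂ * aᵀ + M = 0 ↔
      ∃ R : Matrix (Fin n) (Fin n) ℝ, Rᵀ = R ∧
        a = (2 : ℝ) • (Θ₂ * R) - (1/2 : ℝ) • (M * Θ₂⁻¹) := by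
  have h1 : Θ₂ * Θ₂⁻¹ = 1 := Matrix.mul_nonsing_inv _ hΘinv
  have h2 : Θ₂⁻¹ * Θ₂ = 1 := Matrix.nonsing_inv_mul _ hΘinv
  have e1 : ∀ X : Matrix (Fin n) (Fin n) ℝ, X * Θ₂ * Θ₂⁻¹ = X := by
    intro X; rw [mul_assoc, h1, mul_one]
  have e2 : ∀ X : Matrix (Fin n) (Fin n) ℝ, X * Θ₂⁻¹ * Θ₂ = X := by
    intro X; rw [mul_assoc, h2, mul_one]
  have ht : (Θ₂⁻¹)ᵀ = -Θ₂⁻¹ := by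
    rw [Matrix.transpose_nonsing_inv, hΘasym]
    refine Matrix.inv_eq_right_inv ?_
    simp only [Matrix.neg_mul, Matrix.mul_neg, neg_neg, h1]
  constructor
  · intro h
    have key : Θ₂ * aᵀ = -(a * Θ₂) - M := by
      linear_combination (norm := noncomm_ring) h
    have key2 : aᵀ = -(Θ₂⁻¹ * (a * Θ₂)) - Θ₂⁻¹ * M := by
      have h3 : Θ₂⁻¹ * (Θ₂ * aᵀ) = Θ₂⁻¹ * (-(a * Θ₂) - M) := by rw [key]
      rw [← mul_assoc, h2, one_mul] at h3
      rw [h3]; noncomm_ring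
    refine ⟨(1/2:ℝ) • (Θ₂⁻¹ * a) + (1/4:ℝ) • (Θ₂⁻¹ * M * Θ₂⁻¹), ?_, ?_⟩
    · rw [Matrix.transpose_add, Matrix.transpose_smul, Matrix.transpose_smul,
        Matrix.transpose_mul, Matrix.transpose_mul, Matrix.transpose_mul, ht, hM, key2]
      simp only [Matrix.neg_mul, Matrix.mul_neg, Matrix.sub_mul, neg_neg, ← mul_assoc,
        e1, e2, h1, h2, one_mul]
      module
    · simp only [Matrix.mul_add, Matrix.mul_smul, ← mul_assoc, e1, e2, h1, h2, one_mul]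
      module
  · rintro ⟨R, hR, rfl⟩
    have htrans : ((2:ℝ) • (Θ₂ * R) - (1/2:ℝ) • (M * Θ₂⁻¹))ᵀ
        = -((2:ℝ) • (R * Θ₂)) - (1/2:ℝ) • (Θ₂⁻¹ * M) := by
      rw [Matrix.transpose_sub, Matrix.transpose_smul, Matrix.transpose_smul,
        Matrix.transpose_mul, Matrix.transpose_mul, hR, hΘasym, ht, hM]
      simp only [Matrix.neg_mul, Matrix.mul_neg, neg_neg]
      module
    rw [htrans]
    simp only [Matrix.sub_mul, Matrix.mul_add, Matrix.mul_sub, Matrix.add_mul,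
      Matrix.smul_mul, Matrix.mul_smul, Matrix.mul_neg, Matrix.neg_mul, ← mul_assoc,
      e1, e2, h1, h2, one_mul]
    module
end

section
/- Let E : U₀ → ℝ be continuously differentiable on an open subset U₀ of a finite-dimensional real inner product space, with gradient g, and let (u_k) ⊂ U₀ satisfy u_{k+1} = u_k − s_k g(u_k) with Armijo stepsizes: s_k = h_k f^{j_k} where f ∈ (0,1), h_k is bounded away from 0 along any subsequence converging to a point with nonzero gradient, σ ∈ (0,1), and j_k is the smallest nonnegative integer ℓ such that E(u_k) − E(u_k − h_k f^ℓ g(u_k)) ≥ σ h_k f^ℓ ‖g(u_k)‖². If E(u_k) is bounded below, then every limit point u* ∈ U₀ of (u_k) satisfies g(u*) = 0. -/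
/-!
If `g u* ≠ 0`, then near `u*` and for all sufficiently small steps `t ≥ 0` the Armijo
inequality `E x - E (x - t g x) ≥ σ t ‖g x‖²` holds uniformly, because `E` is strictly
differentiable at `u*` and `σ ‖g u*‖² < ‖g u*‖²`. On the other hand the accepted decreases
`σ s_k ‖g(u_k)‖²` are summable since `E(u_k)` is bounded below, so `s_k → 0` along a
subsequence converging to `u*`. As `h_k` stays away from `0` there, eventually `j_k ≥ 1`,
and then the rejected step `s_k / f`, which also tends to `0`, would have satisfied the
Armijo inequality: a contradiction with the minimality of `j_k`.
-/

open Filter Topology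

theorem tendsto_zero_of_le_sub_succ {a b : ℕ → ℝ} (ha : BddBelow (Set.range a))
    (hb : ∀ k, 0 ≤ b k) (hab : ∀ k, b k ≤ a k - a (k + 1)) : Tendsto b atTop (𝓝 0) := by
  have hanti : Antitone a := antitone_nat_of_succ_le fun k => by linarith [hb k, hab k]
  have hlim := tendsto_atTop_ciInf hanti ha
  have hdiff : Tendsto (fun k => a k - a (k + 1)) atTop (𝓝 0) := by
    simpa using hlim.sub (hlim.comp (tendsto_add_atTop_nat 1))
  exact squeeze_zero hb hab hdiff

theorem tendsto_zero_of_tendsto_mul {α : Type*} {l : Filter α} {x y : α → ℝ} {y₀ : ℝ}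
    (hxy : Tendsto (fun p => x p * y p) l (𝓝 0)) (hy : Tendsto y l (𝓝 y₀)) (hy₀ : y₀ ≠ 0) :
    Tendsto x l (𝓝 0) := by
  refine (zero_div y₀ ▸ hxy.div hy hy₀).congr' ?_
  filter_upwards [hy.eventually_ne hy₀] with p hp
  exact mul_div_cancel_right₀ _ hp

theorem eventually_ne_zero_and_tendsto_mul_pow_pred {ι : Type*} {l : Filter ι} {h : ι → ℝ}
    {j : ι → ℕ} {f ε : ℝ} (hf : 0 < f) (hh : ∀ i, 0 ≤ h i) (hε : 0 < ε)
    (hεh : ∀ᶠ i in l, ε ≤ h i) (hs : Tendsto (fun i => h i * f ^ j i) l (𝓝 0)) :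
    (∀ᶠ i in l, j i ≠ 0) ∧ Tendsto (fun i => h i * f ^ (j i - 1)) l (𝓝[≥] 0) := by
  have hj : ∀ᶠ i in l, j i ≠ 0 := by
    filter_upwards [hεh, hs.eventually_lt_const hε] with i hεi hsi hji
    rw [hji, pow_zero, mul_one] at hsi
    linarith
  refine ⟨hj, tendsto_nhdsWithin_iff.mpr ⟨?_, Eventually.of_forall fun i => ?_⟩⟩
  · refine (zero_div f ▸ hs.div_const f).congr' ?_
    filter_upwards [hj] with i hji
    obtain ⟨n, hn⟩ := Nat.exists_eq_add_one_of_ne_zero hji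
    rw [hn, Nat.add_sub_cancel, pow_succ]
    field_simp
  · have := hh i
    exact Set.mem_Ici.mpr (by positivity)

theorem HasStrictFDerivAt.eventually_mul_le_sub_sub_smul {F : Type*} [NormedAddCommGroup F]
    [NormedSpace ℝ F] {E : F → ℝ} {E' : F →L[ℝ] ℝ} {x₀ : F} (hE : HasStrictFDerivAt E E' x₀)
    {d : F → F} (hd : ContinuousAt d x₀) {c : F → ℝ} (hc : ContinuousAt c x₀)
    (hlt : c x₀ < E' (d x₀)) :
    ∀ᶠ p : F × ℝ in 𝓝 x₀ ×ˢ 𝓝[≥] 0, p.2 * c p.1 ≤ E p.1 - E (p.1 - p.2 • d p.1) := by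
  -- `η` leaves room for the remainder `η * t * ‖d x‖` below the margin `E' (d x₀) - c x₀`
  set η := (E' (d x₀) - c x₀) / (‖d x₀‖ + 1)
  have hη : 0 < η := div_pos (sub_pos.mpr hlt) (by positivity)
  have hmargin : 0 < E' (d x₀) - c x₀ - η * ‖d x₀‖ := by
    have : η * (‖d x₀‖ + 1) = E' (d x₀) - c x₀ := div_mul_cancel₀ _ (by positivity)
    nlinarith
  have hcont : ContinuousAt (fun x => E' (d x) - c x - η * ‖d x‖) x₀ := by fun_prop
  have hpair : Tendsto (fun p : F × ℝ => (p.1, p.1 - p.2 • d p.1)) (𝓝 x₀ ×ˢ 𝓝[≥] 0)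
      (𝓝 (x₀, x₀)) := by
    have : ContinuousAt (fun p : F × ℝ => (p.1, p.1 - p.2 • d p.1)) (x₀, 0) := by fun_prop
    simpa using this.tendsto.mono_left
      (nhds_prod_eq (x := x₀) (y := (0:ℝ)) ▸ prod_mono le_rfl nhdsWithin_le_nhds)
  filter_upwards [hpair.eventually (hE.isLittleO.def hη),
    tendsto_fst.eventually (hcont.eventually (eventually_gt_nhds hmargin)),
    tendsto_snd.eventually eventually_mem_nhdsWithin] with ⟨x, t⟩ hrem hpos ht
  simp only [sub_sub_cancel, map_smul, smul_eq_mul, norm_smul, Real.norm_eq_abs,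
    abs_of_nonneg (show (0:ℝ) ≤ t from ht)] at hrem hpos ⊢
  nlinarith [neg_abs_le (E x - E (x - t • d x) - t * E' (d x)), mul_nonneg ht hpos.le]

theorem ContDiffOn.continuousOn_of_hasGradientAt {U : Type*} [NormedAddCommGroup U]
    [InnerProductSpace ℝ U] [CompleteSpace U] {E : U → ℝ} {g : U → U} {s : Set U}
    (hE : ContDiffOn ℝ 1 E s) (hs : IsOpen s) (hg : ∀ x ∈ s, HasGradientAt E (g x) x) :
    ContinuousOn g s := by
  refine ((InnerProductSpace.toDual ℝ U).symm.continuous.comp_continuousOn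
    (hE.continuousOn_fderiv_of_isOpen hs le_rfl)).congr fun x hx => ?_
  simp [(hg x hx).hasFDerivAt.fderiv]

theorem HasStrictFDerivAt.eventually_armijo {U : Type*} [NormedAddCommGroup U]
    [InnerProductSpace ℝ U] [CompleteSpace U] {E : U → ℝ} {g : U → U} {x₀ : U}
    (hE : HasStrictFDerivAt E (InnerProductSpace.toDual ℝ U (g x₀)) x₀)
    (hg : ContinuousAt g x₀) (hg₀ : g x₀ ≠ 0) {σ : ℝ} (hσ : σ < 1) :
    ∀ᶠ p : U × ℝ in 𝓝 x₀ ×ˢ 𝓝[≥] 0, σ * p.2 * ‖g p.1‖ ^ 2 ≤ E p.1 - E (p.1 - p.2 • g p.1) := by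
  have hlt : σ * ‖g x₀‖ ^ 2 < InnerProductSpace.toDual ℝ U (g x₀) (g x₀) := by
    rw [InnerProductSpace.toDual_apply_apply, real_inner_self_eq_norm_sq]
    nlinarith [pow_pos (norm_pos_iff.mpr hg₀) 2]
  filter_upwards [hE.eventually_mul_le_sub_sub_smul hg (c := fun x => σ * ‖g x‖ ^ 2)
    (by fun_prop) hlt] with p hp
  linarith

theorem armijo_gradient_descent_limit_points_stationary_general
    {U : Type*} [NormedAddCommGroup U] [InnerProductSpace ℝ U]
    [FiniteDimensional ℝ U]
    (U₀ : Set U) (hU₀ : IsOpen U₀)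
    (E : U → ℝ) (g : U → U)
    (hE : ContDiffOn ℝ 1 E U₀)
    (hg : ∀ x ∈ U₀, HasGradientAt E (g x) x)
    (u : ℕ → U)
    (f σ : ℝ) (hf : f ∈ Set.Ioo (0:ℝ) 1) (hσ : σ ∈ Set.Ioo (0:ℝ) 1)
    (h s : ℕ → ℝ) (hh : ∀ k, 0 < h k)
    -- the search horizons are bounded away from zero along any subsequence
    -- converging to a point of the domain with nonzero gradient
    (hhsub : ∀ φ : ℕ → ℕ, StrictMono φ → ∀ ustar ∈ U₀,
      Tendsto (fun p => u (φ p)) atTop (nhds ustar) → g ustar ≠ 0 →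
        ∃ ε > 0, ∀ᶠ p in atTop, ε ≤ h (φ p))
    (j : ℕ → ℕ)
    -- `j k` is the smallest `ℓ ≥ 0` for which the Armijo inequality holds
    (hjmin : ∀ k, (E (u k) - E (u k - (h k * f ^ (j k)) • g (u k))
          ≥ σ * (h k * f ^ (j k)) * ‖g (u k)‖^2) ∧
        ∀ ℓ < j k, ¬ (E (u k) - E (u k - (h k * f ^ ℓ) • g (u k))
          ≥ σ * (h k * f ^ ℓ) * ‖g (u k)‖^2))
    (hsk : ∀ k, s k = h k * f ^ (j k))
    (hrec : ∀ k, u (k+1) = u k - s k • g (u k))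
    (hbdd : BddBelow (Set.range fun k => E (u k))) :
    ∀ ustar ∈ U₀,
      (∃ φ : ℕ → ℕ, StrictMono φ ∧ Tendsto (fun p => u (φ p)) atTop (nhds ustar)) →
      g ustar = 0 := by
  rintro ustar hustar ⟨φ, hφ, hconv⟩
  by_contra hg₀
  obtain ⟨hf₀, -⟩ := hf
  obtain ⟨hσ₀, hσ₁⟩ := hσ
  have hdecrease : Tendsto (fun k => h k * f ^ j k * (σ * ‖g (u k)‖ ^ 2)) atTop (𝓝 0) := by
    refine tendsto_zero_of_le_sub_succ hbdd (fun k => by have := hh k; positivity) fun k => ?_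
    rw [hrec, hsk]
    linarith [(hjmin k).1]
  have hgc : ContinuousAt g ustar :=
    (hE.continuousOn_of_hasGradientAt hU₀ hg).continuousAt (hU₀.mem_nhds hustar)
  have hstep : Tendsto (fun p => h (φ p) * f ^ j (φ p)) atTop (𝓝 0) :=
    tendsto_zero_of_tendsto_mul (hdecrease.comp hφ.tendsto_atTop)
      (((hgc.tendsto.comp hconv).norm.pow 2).const_mul σ)
      (mul_ne_zero hσ₀.ne' (pow_ne_zero 2 (norm_ne_zero_iff.mpr hg₀)))
  obtain ⟨ε, hε, hεh⟩ := hhsub φ hφ ustar hustar hconv hg₀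
  obtain ⟨hj, hprev⟩ :=
    eventually_ne_zero_and_tendsto_mul_pow_pred hf₀ (fun p => (hh (φ p)).le) hε hεh hstep
  have hstrict : HasStrictFDerivAt E (InnerProductSpace.toDual ℝ U (g ustar)) ustar :=
    (hE.contDiffAt (hU₀.mem_nhds hustar)).hasStrictFDerivAt' (hg ustar hustar).hasFDerivAt
      one_ne_zero
  obtain ⟨p, hjp, harmijo⟩ :=
    (hj.and ((hconv.prodMk hprev).eventually (hstrict.eventually_armijo hgc hg₀ hσ₁))).exists
  exact (hjmin (φ p)).2 (j (φ p) - 1) (by omega) (by linarith)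

/-- Convergence of gradient descent with the Armijo rule and adaptive search
horizons: every limit point of the iterates lying in the domain is a stationary
point of the cost. -/
theorem armijo_gradient_descent_limit_points_stationary
    {U : Type*} [NormedAddCommGroup U] [InnerProductSpace ℝ U]
    [FiniteDimensional ℝ U]
    (U₀ : Set U) (hU₀ : IsOpen U₀)
    (E : U → ℝ) (g : U → U)
    (hE : ContDiffOn ℝ 1 E U₀)
    (hg : ∀ x ∈ U₀, HasGradientAt E (g x) x)
    (u : ℕ → U) (hu : ∀ k, u k ∈ U₀)
    (f σ : ℝ) (hf : f ∈ Set.Ioo (0:ℝ) 1) (hσ : σ ∈ Set.Ioo (0:ℝ) 1)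
    (h s : ℕ → ℝ) (hh : ∀ k, 0 < h k)
    -- the search horizons are bounded away from zero along any subsequence
    -- converging to a point of the domain with nonzero gradient
    (hhsub : ∀ φ : ℕ → ℕ, StrictMono φ → ∀ ustar ∈ U₀,
      Tendsto (fun p => u (φ p)) atTop (nhds ustar) → g ustar ≠ 0 →
        ∃ ε > 0, ∀ᶠ p in atTop, ε ≤ h (φ p))
    (j : ℕ → ℕ)
    -- `j k` is the smallest `ℓ ≥ 0` for which the Armijo inequality holds
    (hjmin : ∀ k, (E (u k) - E (u k - (h k * f ^ (j k)) • g (u k))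
          ≥ σ * (h k * f ^ (j k)) * ‖g (u k)‖^2) ∧
        ∀ ℓ < j k, ¬ (E (u k) - E (u k - (h k * f ^ ℓ) • g (u k))
          ≥ σ * (h k * f ^ ℓ) * ‖g (u k)‖^2))
    (hsk : ∀ k, s k = h k * f ^ (j k))
    (hrec : ∀ k, u (k+1) = u k - s k • g (u k))
    (hbdd : BddBelow (Set.range fun k => E (u k))) :
    ∀ ustar ∈ U₀,
      (∃ φ : ℕ → ℕ, StrictMono φ ∧ Tendsto (fun p => u (φ p)) atTop (nhds ustar)) →
      g ustar = 0 :=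
  armijo_gradient_descent_limit_points_stationary_general U₀ hU₀ E g hE hg u f σ hf hσ h s hh hhsub
    j hjmin hsk hrec hbdd
end

section
/- Let A(u) ∈ ℝ^{N×N}, B(u) ∈ ℝ^{N×m}, C(u) ∈ ℝ^{r×N} depend continuously differentiably on a parameter u in an open subset of a finite-dimensional real vector space, with A(u) Hurwitz for all u. Define E(u) := (1/2) trace(C(u)ᵀ C(u) P(u)) where P(u) solves A(u)P + P A(u)ᵀ + B(u)B(u)ᵀ = 0. Then E is continuously differentiable and its directional derivative along v is D_v E = ⟨H, D_v A⟩ + ⟨Q B, D_v B⟩ + ⟨C P, D_v C⟩, where Q(u) solves A(u)ᵀQ + Q A(u) + C(u)ᵀC(u) = 0 and H := QP. -/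
open Matrix

attribute [local instance] Matrix.frobeniusNormedAddCommGroup Matrix.frobeniusNormedSpace

/-- A real square matrix is Hurwitz if every (complex) eigenvalue has
strictly negative real part. -/
def IsHurwitz {N : ℕ} (A : Matrix (Fin N) (Fin N) ℝ) : Prop :=
  ∀ μ ∈ spectrum ℂ (A.map (Complex.ofReal)), μ.re < 0

/-!
Since `A` is Hurwitz, the spectra of `A` and `-Aᵀ` are disjoint, so by Sylvester's theorem the
Lyapunov operator `L_A X = A X + X Aᵀ` is invertible. Hence `P = -(L_A)⁻¹ (B Bᵀ)` is `C¹`,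
being built from the smooth map `L ↦ L⁻¹` on units, and so is `E`. Differentiating the Lyapunov
equation gives `L_A P' = -(A' P + P A'ᵀ + B' Bᵀ + B B'ᵀ)`; pairing with the dual Gramian `Q`,
for which `L_Aᵀ Q = -Cᵀ C`, turns the term `⟨Cᵀ C, P'⟩` of `D_v E` into
`⟨Q, A' P + P A'ᵀ + B' Bᵀ + B B'ᵀ⟩`, and the symmetry of `P` and `Q` (again by uniqueness)
collapses the result to the claimed formula.
-/

namespace Matrix

variable {m n : Type*} [Fintype m] [DecidableEq m] [Fintype n] [DecidableEq n]

theorem aeval_mul_eq_mul_aeval {R : Type*} [CommRing R] {A : Matrix m m R} {B : Matrix n n R}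
    {X : Matrix m n R} (h : A * X = X * B) (p : Polynomial R) :
    Polynomial.aeval A p * X = X * Polynomial.aeval B p := by
  have hpow : ∀ k : ℕ, A ^ k * X = X * B ^ k := by
    intro k
    induction k with
    | zero => simp
    | succ k ih =>
      rw [pow_succ, pow_succ, Matrix.mul_assoc, h, ← Matrix.mul_assoc, ih, Matrix.mul_assoc]
  induction p using Polynomial.induction_on' with
  | add p q hp hq => rw [map_add, map_add, Matrix.add_mul, Matrix.mul_add, hp, hq]
  | monomial k a =>
    simp only [Polynomial.aeval_monomial, Algebra.algebraMap_eq_smul_one, Matrix.smul_mul,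
      Matrix.mul_smul, Matrix.one_mul, hpow]

variable {𝕜 : Type*} [Field 𝕜]

theorem spectrum_transpose (A : Matrix n n 𝕜) : spectrum 𝕜 Aᵀ = spectrum 𝕜 A := by
  ext μ
  simp only [mem_spectrum_iff_isRoot_charpoly, charpoly_transpose]

theorem eq_zero_of_mul_eq_mul_of_disjoint_spectrum [IsAlgClosed 𝕜] {A : Matrix m m 𝕜}
    {B : Matrix n n 𝕜} {X : Matrix m n 𝕜} (hAB : Disjoint (spectrum 𝕜 A) (spectrum 𝕜 B))
    (h : A * X = X * B) : X = 0 := by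
  cases isEmpty_or_nonempty n
  · exact Subsingleton.elim _ _
  have hdeg : 0 < B.charpoly.degree := by
    rw [charpoly_degree_eq_dim]
    exact_mod_cast Fintype.card_pos
  have hunit : IsUnit (Polynomial.aeval A B.charpoly) := by
    rw [← spectrum.zero_notMem_iff 𝕜, spectrum.map_polynomial_aeval_of_degree_pos _ _ hdeg]
    rintro ⟨μ, hμA, hμB⟩
    exact Set.disjoint_left.mp hAB hμA (mem_spectrum_iff_isRoot_charpoly.mpr hμB)
  have hdet := (isUnit_iff_isUnit_det _).mp hunit
  calc X = ((Polynomial.aeval A B.charpoly)⁻¹ * Polynomial.aeval A B.charpoly) * X := by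
        rw [nonsing_inv_mul _ hdet, Matrix.one_mul]
    _ = 0 := by
        rw [Matrix.mul_assoc, aeval_mul_eq_mul_aeval h, aeval_self_charpoly, Matrix.mul_zero,
          Matrix.mul_zero]

end Matrix

namespace IsHurwitz

variable {N : ℕ} {A : Matrix (Fin N) (Fin N) ℝ}

theorem transpose (hA : IsHurwitz A) : IsHurwitz Aᵀ := by
  intro μ hμ
  rw [Matrix.transpose_map, Matrix.spectrum_transpose] at hμ
  exact hA μ hμ

/-- The spectra of `A` and `-Aᵀ` lie in opposite open half-planes, so Sylvester's theorem
applies. -/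
theorem eq_zero_of_lyapunov (hA : IsHurwitz A) {X : Matrix (Fin N) (Fin N) ℝ}
    (hX : A * X + X * Aᵀ = 0) : X = 0 := by
  set Ac := A.map Complex.ofReal
  have hc : Ac * X.map Complex.ofReal = X.map Complex.ofReal * (-Acᵀ) := by
    have := congrArg (Complex.ofRealHom.mapMatrix) hX
    simp only [map_add, map_mul, map_zero, RingHom.mapMatrix_apply,
      Matrix.transpose_map] at this
    rw [mul_neg]
    exact eq_neg_of_add_eq_zero_left this
  have hdisj : Disjoint (spectrum ℂ Ac) (spectrum ℂ (-Acᵀ)) := by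
    rw [Set.disjoint_left]
    intro μ hμ hμ'
    rw [← spectrum.neg_eq, Set.mem_neg, Matrix.spectrum_transpose] at hμ'
    have h1 := hA μ hμ
    have h2 := hA (-μ) hμ'
    rw [Complex.neg_re] at h2
    linarith
  have hXc := Matrix.eq_zero_of_mul_eq_mul_of_disjoint_spectrum hdisj hc
  ext i j
  simpa using congrFun (congrFun hXc i) j

theorem isSymm_of_lyapunov (hA : IsHurwitz A) {P W : Matrix (Fin N) (Fin N) ℝ}
    (hW : W.IsSymm) (hP : A * P + P * Aᵀ + W = 0) : P.IsSymm := by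
  have hPt : A * Pᵀ + Pᵀ * Aᵀ + W = 0 := by
    simpa [Matrix.transpose_mul, hW.eq, add_comm] using congrArg Matrix.transpose hP
  refine (sub_eq_zero.mp (hA.eq_zero_of_lyapunov ?_)).symm
  rw [Matrix.mul_sub, Matrix.sub_mul]
  calc A * P - A * Pᵀ + (P * Aᵀ - Pᵀ * Aᵀ)
      = (A * P + P * Aᵀ + W) - (A * Pᵀ + Pᵀ * Aᵀ + W) := by abel
    _ = 0 := by rw [hP, hPt, sub_self]

end IsHurwitz

/-- The Frobenius norm induces the product topology on matrices, but not reducibly; making the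
normed topology the preferred instance puts the continuous linear maps below on the normed
spaces used by the calculus. -/
noncomputable abbrev Matrix.frobeniusTopologicalSpace (m n : Type*) [Fintype m] [Fintype n] :
    TopologicalSpace (Matrix m n ℝ) :=
  (Matrix.frobeniusNormedAddCommGroup : NormedAddCommGroup (Matrix m n ℝ)).toUniformSpace
    |>.toTopologicalSpace

attribute [local instance] Matrix.frobeniusTopologicalSpace

namespace Matrix

variable {l m n : Type*} [Fintype l] [Fintype m] [Fintype n]

noncomputable def mulCLM : Matrix l m ℝ →L[ℝ] Matrix m n ℝ →L[ℝ] Matrix l n ℝ :=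
  LinearMap.toContinuousLinearMap <|
    LinearMap.toContinuousLinearMap.toLinearMap ∘ₗ mulLinearMap ℝ

@[simp] theorem mulCLM_apply (X : Matrix l m ℝ) (Y : Matrix m n ℝ) : mulCLM X Y = X * Y := rfl

noncomputable def transposeCLM : Matrix m n ℝ →L[ℝ] Matrix n m ℝ :=
  LinearMap.toContinuousLinearMap (transposeLinearEquiv m n ℝ ℝ).toLinearMap

@[simp] theorem transposeCLM_apply (X : Matrix m n ℝ) : transposeCLM X = Xᵀ := rfl

noncomputable def traceCLM : Matrix n n ℝ →L[ℝ] ℝ :=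
  LinearMap.toContinuousLinearMap (traceLinearMap n ℝ ℝ)

@[simp] theorem traceCLM_apply (X : Matrix n n ℝ) : traceCLM X = X.trace := rfl

noncomputable def lyapunovCLM : Matrix n n ℝ →L[ℝ] Matrix n n ℝ →L[ℝ] Matrix n n ℝ :=
  mulCLM + mulCLM.flip ∘L transposeCLM

@[simp] theorem lyapunovCLM_apply (A X : Matrix n n ℝ) : lyapunovCLM A X = A * X + X * Aᵀ := rfl

end Matrix

section Calculus

variable {V : Type*} [NormedAddCommGroup V] [NormedSpace ℝ V] {l m n : Type*} [Fintype l]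
  [Fintype m] [Fintype n] {s : Set V} {k : WithTop ℕ∞}

theorem ContDiffOn.matrix_mul {f : V → Matrix l m ℝ} {g : V → Matrix m n ℝ}
    (hf : ContDiffOn ℝ k f s) (hg : ContDiffOn ℝ k g s) :
    ContDiffOn ℝ k (fun u => f u * g u) s := by
  simpa using (Matrix.mulCLM.contDiff.comp_contDiffOn hf).clm_apply hg

theorem ContDiffOn.matrix_transpose {f : V → Matrix m n ℝ} (hf : ContDiffOn ℝ k f s) :
    ContDiffOn ℝ k (fun u => (f u)ᵀ) s := by
  simpa [Function.comp_def] using Matrix.transposeCLM.contDiff.comp_contDiffOn hf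

theorem ContDiffOn.matrix_trace {f : V → Matrix n n ℝ} (hf : ContDiffOn ℝ k f s) :
    ContDiffOn ℝ k (fun u => (f u).trace) s := by
  simpa [Function.comp_def] using Matrix.traceCLM.contDiff.comp_contDiffOn hf

variable {x v : V}

theorem HasLineDerivAt.add {F : Type*} [NormedAddCommGroup F] [NormedSpace ℝ F] {f g : V → F}
    {f' g' : F} (hf : HasLineDerivAt ℝ f f' x v) (hg : HasLineDerivAt ℝ g g' x v) :
    HasLineDerivAt ℝ (fun u => f u + g u) (f' + g') x v :=
  HasDerivAt.add hf hg

theorem HasLineDerivAt.const_mul {f : V → ℝ} {f' : ℝ} (c : ℝ)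
    (hf : HasLineDerivAt ℝ f f' x v) :
    HasLineDerivAt ℝ (fun u => c * f u) (c * f') x v :=
  HasDerivAt.const_mul c hf

theorem hasLineDerivAt_const {F : Type*} [NormedAddCommGroup F] [NormedSpace ℝ F] (c : F) :
    HasLineDerivAt ℝ (fun _ => c) 0 x v :=
  hasDerivAt_const 0 c

theorem HasLineDerivAt.matrix_mul {f : V → Matrix l m ℝ} {g : V → Matrix m n ℝ}
    {f' : Matrix l m ℝ} {g' : Matrix m n ℝ} (hf : HasLineDerivAt ℝ f f' x v)
    (hg : HasLineDerivAt ℝ g g' x v) :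
    HasLineDerivAt ℝ (fun u => f u * g u) (f' * g x + f x * g') x v := by
  unfold HasLineDerivAt at *
  have hmul : HasDerivAt (fun t : ℝ => Matrix.mulCLM (n := n) (f (x + t • v)))
      (Matrix.mulCLM f') 0 :=
    Matrix.mulCLM.hasFDerivAt.comp_hasDerivAt 0 hf
  simpa using hmul.clm_apply hg

theorem HasLineDerivAt.matrix_transpose {f : V → Matrix m n ℝ} {f' : Matrix m n ℝ}
    (hf : HasLineDerivAt ℝ f f' x v) : HasLineDerivAt ℝ (fun u => (f u)ᵀ) f'ᵀ x v := by
  unfold HasLineDerivAt at *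
  simpa [Function.comp_def] using Matrix.transposeCLM.hasFDerivAt.comp_hasDerivAt (0 : ℝ) hf

theorem HasLineDerivAt.matrix_trace {f : V → Matrix n n ℝ} {f' : Matrix n n ℝ}
    (hf : HasLineDerivAt ℝ f f' x v) :
    HasLineDerivAt ℝ (fun u => (f u).trace) f'.trace x v := by
  unfold HasLineDerivAt at *
  simpa [Function.comp_def] using Matrix.traceCLM.hasFDerivAt.comp_hasDerivAt (0 : ℝ) hf

end Calculus

theorem IsHurwitz.isUnit_lyapunovCLM {N : ℕ} {A : Matrix (Fin N) (Fin N) ℝ} (hA : IsHurwitz A) :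
    IsUnit (Matrix.lyapunovCLM A) := by
  rw [ContinuousLinearMap.isUnit_iff_isUnit_toLinearMap, LinearMap.isUnit_iff_ker_eq_bot,
    LinearMap.ker_eq_bot']
  exact fun _ hX => hA.eq_zero_of_lyapunov hX

/-- The solution of the Lyapunov equation is `-(L_A)⁻¹ W`, and inversion is smooth on units. -/
theorem contDiffOn_lyapunov_solution {V : Type*} [NormedAddCommGroup V] [NormedSpace ℝ V]
    {N : ℕ} {s : Set V} {k : WithTop ℕ∞} {A W P : V → Matrix (Fin N) (Fin N) ℝ}
    (hA : ContDiffOn ℝ k A s) (hHur : ∀ u ∈ s, IsHurwitz (A u)) (hW : ContDiffOn ℝ k W s)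
    (hP : ∀ u ∈ s, A u * P u + P u * (A u)ᵀ + W u = 0) : ContDiffOn ℝ k P s := by
  have hL : ContDiffOn ℝ k (fun u => Matrix.lyapunovCLM (A u)) s := by
    simpa [Function.comp_def] using Matrix.lyapunovCLM.contDiff.comp_contDiffOn hA
  have hinv : ContDiffOn ℝ k (fun u => Ring.inverse (Matrix.lyapunovCLM (A u))) s := by
    intro u hu
    simpa [Function.comp_def] using
      (contDiffAt_ringInverse ℝ (hHur u hu).isUnit_lyapunovCLM.unit).comp_contDiffWithinAt u
        (hL u hu)
  refine (hinv.clm_apply hW.neg).congr fun u hu => ?_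
  rw [← eq_neg_of_add_eq_zero_left (hP u hu), ← Matrix.lyapunovCLM_apply,
    ← mul_apply_eq_comp, Ring.inverse_mul_cancel _ (hHur u hu).isUnit_lyapunovCLM,
    one_apply_eq_self]

namespace Matrix

variable {n m r : Type*} [Fintype n] [Fintype m] [Fintype r]

section CommSemiring

variable {R : Type*} [CommSemiring R]

theorem trace_mul_add_transpose {S : Matrix n n R} (hS : S.IsSymm) (M : Matrix n n R) :
    (S * (M + Mᵀ)).trace = 2 * (S * M).trace := by
  have hMt : (S * Mᵀ).trace = (S * M).trace := by
    rw [← trace_transpose, transpose_mul, transpose_transpose, hS.eq, trace_mul_comm]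
  rw [Matrix.mul_add, trace_add, hMt, two_mul]

theorem trace_lyapunov_adjoint (A Q X : Matrix n n R) :
    ((Aᵀ * Q + Q * A) * X).trace = (Q * (A * X + X * Aᵀ)).trace := by
  rw [Matrix.add_mul, Matrix.mul_add, trace_add, trace_add, add_comm, Matrix.mul_assoc,
    Matrix.mul_assoc, trace_mul_comm Aᵀ, Matrix.mul_assoc]

end CommSemiring

variable {R : Type*} [CommRing R]

/-- Pairing the differentiated Lyapunov equation for `P` with the dual solution `Q` removes the
derivative `P'` of the state Gramian from the derivative of `tr (Cᵀ C P)`. -/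
theorem trace_lqg_cost_deriv_eq {A P Q A' P' : Matrix n n R} {B B' : Matrix n m R}
    {C C' : Matrix r n R} (hPs : P.IsSymm) (hQs : Q.IsSymm) (hQ : Aᵀ * Q + Q * A + Cᵀ * C = 0)
    (hP' : A' * P + A * P' + (P' * Aᵀ + P * A'ᵀ) + (B' * Bᵀ + B * B'ᵀ) = 0) :
    ((C'ᵀ * C + Cᵀ * C')ᵀ * P + (Cᵀ * C)ᵀ * P').trace
      = 2 * (((Q * P)ᵀ * A').trace + ((Q * B)ᵀ * B').trace + ((C * P)ᵀ * C').trace) := by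
  have houtput : ((C'ᵀ * C + Cᵀ * C')ᵀ * P).trace = 2 * ((C * P)ᵀ * C').trace := by
    calc ((C'ᵀ * C + Cᵀ * C')ᵀ * P).trace = (P * (Cᵀ * C' + (Cᵀ * C')ᵀ)).trace := by
          simp only [trace_mul_comm _ P, transpose_add, transpose_mul, transpose_transpose,
            add_comm]
      _ = 2 * ((C * P)ᵀ * C').trace := by
          rw [trace_mul_add_transpose hPs, transpose_mul, hPs.eq, Matrix.mul_assoc]
  have hP'sym : A * P' + P' * Aᵀ = -((A' * P + (A' * P)ᵀ) + (B' * Bᵀ + (B' * Bᵀ)ᵀ)) := by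
    rw [transpose_mul, transpose_mul, transpose_transpose, hPs.eq, eq_neg_iff_add_eq_zero,
      ← hP']
    abel
  have hstate : ((Cᵀ * C)ᵀ * P').trace
      = 2 * (((Q * P)ᵀ * A').trace + ((Q * B)ᵀ * B').trace) := by
    calc ((Cᵀ * C)ᵀ * P').trace = -((Aᵀ * Q + Q * A) * P').trace := by
          rw [transpose_mul, transpose_transpose, eq_neg_of_add_eq_zero_right hQ, Matrix.neg_mul,
            trace_neg]
      _ = (Q * ((A' * P + (A' * P)ᵀ) + (B' * Bᵀ + (B' * Bᵀ)ᵀ))).trace := by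
          rw [trace_lyapunov_adjoint, hP'sym, Matrix.mul_neg, trace_neg, neg_neg]
      _ = 2 * ((Q * (A' * P)).trace + (Q * (B' * Bᵀ)).trace) := by
          rw [Matrix.mul_add, trace_add, trace_mul_add_transpose hQs,
            trace_mul_add_transpose hQs, mul_add]
      _ = 2 * (((Q * P)ᵀ * A').trace + ((Q * B)ᵀ * B').trace) := by
          rw [transpose_mul, transpose_mul, hPs.eq, hQs.eq, trace_mul_comm Q, Matrix.mul_assoc,
            trace_mul_comm Q, Matrix.mul_assoc, trace_mul_comm A', trace_mul_comm B']
  rw [trace_add, houtput, hstate]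
  ring

end Matrix

theorem lqg_cost_directional_derivative_general
    {V : Type*} [NormedAddCommGroup V] [NormedSpace ℝ V]
    {N m r : ℕ}
    (U₀ : Set V) (hU₀ : IsOpen U₀)
    (A : V → Matrix (Fin N) (Fin N) ℝ)
    (B : V → Matrix (Fin N) (Fin m) ℝ)
    (C : V → Matrix (Fin r) (Fin N) ℝ)
    (hA : ContDiffOn ℝ 1 A U₀) (hB : ContDiffOn ℝ 1 B U₀) (hC : ContDiffOn ℝ 1 C U₀)
    (hHur : ∀ u ∈ U₀, IsHurwitz (A u))
    (P Q : V → Matrix (Fin N) (Fin N) ℝ)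
    (hP : ∀ u ∈ U₀, A u * P u + P u * (A u)ᵀ + B u * (B u)ᵀ = 0)
    (hQ : ∀ u ∈ U₀, (A u)ᵀ * Q u + Q u * A u + (C u)ᵀ * C u = 0)
    (E : V → ℝ)
    (hE : ∀ u ∈ U₀, E u = (1/2 : ℝ) * (((C u)ᵀ * C u)ᵀ * P u).trace)
    (A' : V → V → Matrix (Fin N) (Fin N) ℝ)
    (B' : V → V → Matrix (Fin N) (Fin m) ℝ)
    (C' : V → V → Matrix (Fin r) (Fin N) ℝ)
    (hA' : ∀ u ∈ U₀, ∀ v, HasLineDerivAt ℝ A (A' u v) u v)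
    (hB' : ∀ u ∈ U₀, ∀ v, HasLineDerivAt ℝ B (B' u v) u v)
    (hC' : ∀ u ∈ U₀, ∀ v, HasLineDerivAt ℝ C (C' u v) u v) :
    ContDiffOn ℝ 1 E U₀ ∧
    ∀ u ∈ U₀, ∀ v : V,
      HasLineDerivAt ℝ E
        (((Q u * P u)ᵀ * A' u v).trace + ((Q u * B u)ᵀ * B' u v).trace
          + ((C u * P u)ᵀ * C' u v).trace) u v := by
  have hPsmooth : ContDiffOn ℝ 1 P U₀ :=
    contDiffOn_lyapunov_solution hA hHur (hB.matrix_mul hB.matrix_transpose) hP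
  have hEsmooth : ContDiffOn ℝ 1 E U₀ :=
    (contDiffOn_const.mul ((hC.matrix_transpose.matrix_mul hC).matrix_transpose.matrix_mul
      hPsmooth).matrix_trace).congr hE
  refine ⟨hEsmooth, fun u hu v => ?_⟩
  have hnear : U₀ ∈ nhds u := hU₀.mem_nhds hu
  have hPsymm : (P u).IsSymm := (hHur u hu).isSymm_of_lyapunov
    (by rw [Matrix.IsSymm, Matrix.transpose_mul, Matrix.transpose_transpose]) (hP u hu)
  have hQsymm : (Q u).IsSymm := (hHur u hu).transpose.isSymm_of_lyapunov (W := (C u)ᵀ * C u)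
    (by rw [Matrix.IsSymm, Matrix.transpose_mul, Matrix.transpose_transpose])
    (by simpa only [Matrix.transpose_transpose] using hQ u hu)
  have hPd : HasLineDerivAt ℝ P (fderiv ℝ P u v) u v :=
    ((hPsmooth.contDiffAt hnear).differentiableAt one_ne_zero).hasFDerivAt.hasLineDerivAt v
  have hLyapunovDeriv := ((((hA' u hu v).matrix_mul hPd).add
    (hPd.matrix_mul (hA' u hu v).matrix_transpose)).add
      ((hB' u hu v).matrix_mul (hB' u hu v).matrix_transpose)).unique
    ((hasLineDerivAt_const 0).congr_of_eventuallyEq (Filter.eventually_of_mem hnear hP))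
  have hEDeriv := ((((hC' u hu v).matrix_transpose.matrix_mul (hC' u hu v)).matrix_transpose
    |>.matrix_mul hPd).matrix_trace.const_mul (1 / 2 : ℝ)).congr_of_eventuallyEq
      (Filter.eventually_of_mem hnear hE)
  rw [Matrix.trace_lqg_cost_deriv_eq hPsymm hQsymm (hQ u hu) hLyapunovDeriv] at hEDeriv
  convert hEDeriv using 1
  ring

/-- Differentiability of the LQG cost `E(u) = (1/2)⟨C(u)ᵀC(u), P(u)⟩` for
parameter-dependent state-space matrices, with directional derivative
`D_v E = ⟨H, D_v A⟩ + ⟨Q B, D_v B⟩ + ⟨C P, D_v C⟩` where `H = QP`. -/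
theorem lqg_cost_directional_derivative
    {V : Type*} [NormedAddCommGroup V] [NormedSpace ℝ V] [FiniteDimensional ℝ V]
    {N m r : ℕ}
    (U₀ : Set V) (hU₀ : IsOpen U₀)
    (A : V → Matrix (Fin N) (Fin N) ℝ)
    (B : V → Matrix (Fin N) (Fin m) ℝ)
    (C : V → Matrix (Fin r) (Fin N) ℝ)
    (hA : ContDiffOn ℝ 1 A U₀) (hB : ContDiffOn ℝ 1 B U₀) (hC : ContDiffOn ℝ 1 C U₀)
    (hHur : ∀ u ∈ U₀, IsHurwitz (A u))
    (P Q : V → Matrix (Fin N) (Fin N) ℝ)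
    (hP : ∀ u ∈ U₀, A u * P u + P u * (A u)ᵀ + B u * (B u)ᵀ = 0)
    (hQ : ∀ u ∈ U₀, (A u)ᵀ * Q u + Q u * A u + (C u)ᵀ * C u = 0)
    (E : V → ℝ)
    (hE : ∀ u ∈ U₀, E u = (1/2 : ℝ) * (((C u)ᵀ * C u)ᵀ * P u).trace)
    (A' : V → V → Matrix (Fin N) (Fin N) ℝ)
    (B' : V → V → Matrix (Fin N) (Fin m) ℝ)
    (C' : V → V → Matrix (Fin r) (Fin N) ℝ)
    (hA' : ∀ u ∈ U₀, ∀ v, HasLineDerivAt ℝ A (A' u v) u v)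
    (hB' : ∀ u ∈ U₀, ∀ v, HasLineDerivAt ℝ B (B' u v) u v)
    (hC' : ∀ u ∈ U₀, ∀ v, HasLineDerivAt ℝ C (C' u v) u v) :
    ContDiffOn ℝ 1 E U₀ ∧
    ∀ u ∈ U₀, ∀ v : V,
      HasLineDerivAt ℝ E
        (((Q u * P u)ᵀ * A' u v).trace + ((Q u * B u)ᵀ * B' u v).trace
          + ((C u * P u)ᵀ * C' u v).trace) u v :=
  lqg_cost_directional_derivative_general U₀ hU₀ A B C hA hB hC hHur P Q hP hQ E hE A' B' C' hA' hB'
    hC'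
end
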